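/- Let s⁰ ∈ ℤ^ℕ be exponentially bounded and let X_{s⁰}(𝓕) = {x ∈ J(𝓕) : |s_n(x)| ≥ |s⁰_n| for all n ≥ 0}, where s_n(x) denotes the n-th entry of the address of x. Then the set of endpoints of J(𝓕) contained in X_{s⁰}(𝓕), namely {(t_s, s) : s exponentially bounded with |s_n| ≥ |s⁰_n| for all n ≥ 0}, is dense in X_{s⁰}(𝓕). Moreover, if s⁰ is fast, then every such endpoint is an escaping endpoint of 𝓕. -/

import Mathlib

open Set Filter Topology OnePoint

noncomputable section

/-- The space of external addresses: integer sequences `s₀ s₁ s₂ …`. -/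
abbrev Addr : Type := ℕ → ℤ

/-- The one-sided shift on external addresses. -/
def shift (s : Addr) : Addr := fun n => s (n + 1)

/-- The model map `𝓕(t, s) = (F(t) − 2π|s₁|, σ(s))`, where `F(t) = eᵗ − 1`. -/
def Fmodel : ℝ × Addr → ℝ × Addr :=
  fun x => (Real.exp x.1 - 1 - 2 * Real.pi * |(x.2 1 : ℝ)|, shift x.2)

/-- The model Julia set `J(𝓕)`: points whose forward orbit stays in `[0,∞) × ℤ^ℕ`. -/
def JF : Set (ℝ × Addr) := {x | ∀ n : ℕ, 0 ≤ (Fmodel^[n] x).1}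

/-- The model escaping set `I(𝓕)`. -/
def IF : Set (ℝ × Addr) :=
  {x | x ∈ JF ∧ Tendsto (fun n => (Fmodel^[n] x).1) atTop atTop}

/-- An address `s` is exponentially bounded if `(t, s) ∈ J(𝓕)` for some `t`. -/
def ExpBounded (s : Addr) : Prop := ∃ t : ℝ, (t, s) ∈ JF

/-- The minimal potential `t_s = min {t ≥ 0 : (t, s) ∈ J(𝓕)}` of an address `s`. -/
def tmin (s : Addr) : ℝ := sInf {t | (t, s) ∈ JF}

/-- An exponentially bounded address `s` is fast if the endpoint `(t_s, s)` escapes. -/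
def Fast (s : Addr) : Prop := ExpBounded s ∧ (tmin s, s) ∈ IF

/-- The set `Ẽ(𝓕)` of escaping endpoints of the model: the points `(t_s, s)` for fast `s`. -/
def escEndF : Set (ℝ × Addr) := {x | ∃ s : Addr, Fast s ∧ x = (tmin s, s)}

/-- The inverse `F⁻¹(t) = log(1 + t)` of `F(t) = eᵗ − 1`. -/
def Finv (t : ℝ) : ℝ := Real.log (1 + t)

/-- The sub-fan `X_{s⁰}(𝓕) = {x ∈ J(𝓕) : |s_n(x)| ≥ |s⁰_n| for all n ≥ 0}`. -/
def Xsub (s0 : Addr) : Set (ℝ × Addr) := {x | x ∈ JF ∧ ∀ n : ℕ, |s0 n| ≤ |x.2 n|}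

/-- The endpoints of `J(𝓕)` contained in `X_{s⁰}(𝓕)`. -/
def endpointsIn (s0 : Addr) : Set (ℝ × Addr) :=
  {p | ∃ s : Addr, ExpBounded s ∧ (∀ n : ℕ, |s0 n| ≤ |s n|) ∧ p = (tmin s, s)}

/-! Density: given `(t, s)` in the sub-fan, `ε > 0` and `m`, replace `s_{n+1}` for a large `n ≥ m`
by `|s_{n+1}| + j`, with `j` the first value for which `(t, ·)` leaves `J(𝓕)`. The new address
stays in the sub-fan and agrees with `s` up to `n`, and its endpoint lies in `(t, t + ε]`: along
orbits in `[0, ∞)` the model expands potentials, so the extra `ε` at time `0` outweighs the `2π`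
lost at time `n + 1`.

Escaping: `𝓕` maps the endpoint `(t_s, s)` to the endpoint `(t_{σ(s)}, σ(s))`, and `t_s` is
monotone in `|s|`, so the orbit of `(t_s, s)` dominates that of `(t_{s⁰}, s⁰)`. -/

def orb (s : Addr) (t : ℝ) : ℕ → ℝ
  | 0 => t
  | n + 1 => Real.exp (orb s t n) - 1 - 2 * Real.pi * |(s (n + 1) : ℝ)|

lemma Fmodel_iterate (s : Addr) (t : ℝ) :
    ∀ n, Fmodel^[n] (t, s) = (orb s t n, fun k => s (k + n))
  | 0 => rfl
  | n + 1 => by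
    rw [Function.iterate_succ_apply', Fmodel_iterate s t n]
    simp only [Fmodel, orb, Nat.add_comm 1 n, Prod.mk.injEq, true_and]
    funext k
    exact congrArg s (by omega)

lemma mem_JF_iff_orb {s : Addr} {t : ℝ} : (t, s) ∈ JF ↔ ∀ n, 0 ≤ orb s t n := by
  show (∀ n, 0 ≤ (Fmodel^[n] (t, s)).1) ↔ _
  simp only [Fmodel_iterate]

lemma orb_le_orb {s s' : Addr} {t t' : ℝ} {m n : ℕ} (hmn : m ≤ n)
    (ht : orb s t m ≤ orb s' t' m) (hs : ∀ k, m < k → k ≤ n → |s' k| ≤ |s k|) :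
    orb s t n ≤ orb s' t' n := by
  induction n, hmn using Nat.le_induction with
  | base => exact ht
  | succ n hmn ih =>
    have habs : |(s' (n + 1) : ℝ)| ≤ |(s (n + 1) : ℝ)| := by
      exact_mod_cast hs (n + 1) (by omega) le_rfl
    have hexp := Real.exp_le_exp.2 (ih fun k hk hkn => hs k hk (by omega))
    simp only [orb]
    nlinarith [Real.pi_pos]

lemma orb_mono {s : Addr} {t t' : ℝ} (htt' : t ≤ t') (n : ℕ) : orb s t n ≤ orb s t' n :=
  orb_le_orb (Nat.zero_le n) htt' fun _ _ _ => le_rfl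

lemma orb_eq_orb_of_abs_eq {s s' : Addr} {t : ℝ} {n : ℕ}
    (hs : ∀ k, 0 < k → k ≤ n → |s k| = |s' k|) : orb s t n = orb s' t n :=
  le_antisymm (orb_le_orb (Nat.zero_le n) le_rfl fun k hk hkn => (hs k hk hkn).ge)
    (orb_le_orb (Nat.zero_le n) le_rfl fun k hk hkn => (hs k hk hkn).le)

lemma exp_sub_sub_one_le_exp_sub_exp {a b : ℝ} (ha : 0 ≤ a) (hab : a ≤ b) :
    Real.exp (b - a) - 1 ≤ Real.exp b - Real.exp a := by
  have h : Real.exp b = Real.exp a * Real.exp (b - a) := by rw [← Real.exp_add, add_sub_cancel]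
  nlinarith [Real.one_le_exp ha, Real.one_le_exp (sub_nonneg.2 hab)]

/-- The gap `Δ ≥ ε` between the two orbits grows by at least `e^Δ - 1 - Δ ≥ eᵉ - 1 - ε` per step. -/
lemma orb_add_sub_orb_ge {s : Addr} {t ε : ℝ} (hε : 0 ≤ ε) :
    ∀ n, (∀ k < n, 0 ≤ orb s t k) → ε + n * (Real.exp ε - 1 - ε) ≤ orb s (t + ε) n - orb s t n
  | 0, _ => by simp [orb]
  | n + 1, h => by
    have ih := orb_add_sub_orb_ge hε n fun k hk => h k (by omega)
    have hc : 0 ≤ Real.exp ε - 1 - ε := by linarith [Real.add_one_le_exp ε]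
    set Δ := orb s (t + ε) n - orb s t n
    have hεΔ : ε ≤ Δ := le_trans (by nlinarith [(Nat.cast_nonneg n : (0 : ℝ) ≤ n)]) ih
    have hstep := exp_sub_sub_one_le_exp_sub_exp (h n (by omega))
      (by linarith : orb s t n ≤ orb s (t + ε) n)
    have hmono := exp_sub_sub_one_le_exp_sub_exp (by linarith) hεΔ
    have hlin := Real.add_one_le_exp (Δ - ε)
    simp only [orb]
    push_cast
    linarith

lemma continuous_Fmodel : Continuous Fmodel := by
  unfold Fmodel shift
  fun_prop

lemma isClosed_JF : IsClosed JF := by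
  simp only [JF, ofPred_forall]
  exact isClosed_iInter fun n => isClosed_le continuous_const
    (continuous_fst.comp (continuous_Fmodel.iterate n))

lemma isLeast_tmin {s : Addr} (hs : ExpBounded s) : IsLeast {t | (t, s) ∈ JF} (tmin s) := by
  have hclosed : IsClosed {t : ℝ | (t, s) ∈ JF} := isClosed_JF.preimage (Continuous.prodMk_left s)
  have hbdd : BddBelow {t | (t, s) ∈ JF} := ⟨0, fun t ht => mem_JF_iff_orb.1 ht 0⟩
  exact ⟨hclosed.csInf_mem hs hbdd, fun t ht => csInf_le hbdd ht⟩

lemma tmin_mem {s : Addr} (hs : ExpBounded s) : (tmin s, s) ∈ JF := (isLeast_tmin hs).1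

lemma mem_JF_iff_tmin_le {s : Addr} (hs : ExpBounded s) {t : ℝ} : (t, s) ∈ JF ↔ tmin s ≤ t :=
  ⟨fun ht => (isLeast_tmin hs).2 ht, fun ht => mem_JF_iff_orb.2 fun n =>
    (mem_JF_iff_orb.1 (tmin_mem hs) n).trans (orb_mono ht n)⟩

lemma mem_JF_of_abs_le {s s' : Addr} {t : ℝ} (hs : (t, s) ∈ JF) (h : ∀ k, |s' k| ≤ |s k|) :
    (t, s') ∈ JF :=
  mem_JF_iff_orb.2 fun n =>
    (mem_JF_iff_orb.1 hs n).trans (orb_le_orb (Nat.zero_le n) le_rfl fun k _ _ => h k)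

lemma tmin_le_tmin {s s' : Addr} (hs : ExpBounded s) (h : ∀ k, |s' k| ≤ |s k|) :
    tmin s' ≤ tmin s :=
  (isLeast_tmin ⟨_, mem_JF_of_abs_le (tmin_mem hs) h⟩).2 (mem_JF_of_abs_le (tmin_mem hs) h)

lemma mem_JF_iff_Fmodel {x : ℝ × Addr} : x ∈ JF ↔ 0 ≤ x.1 ∧ Fmodel x ∈ JF := by
  show (∀ n, 0 ≤ (Fmodel^[n] x).1) ↔ 0 ≤ x.1 ∧ ∀ n, 0 ≤ (Fmodel^[n] (Fmodel x)).1
  simp only [← Function.iterate_succ_apply]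
  exact ⟨fun h => ⟨h 0, fun n => h (n + 1)⟩, fun h n => n.casesOn h.1 h.2⟩

lemma expBounded_shift {s : Addr} (hs : ExpBounded s) : ExpBounded (shift s) :=
  ⟨_, (mem_JF_iff_Fmodel.1 (tmin_mem hs)).2⟩

lemma expBounded_shift_iterate {s : Addr} (hs : ExpBounded s) : ∀ n, ExpBounded (shift^[n] s)
  | 0 => hs
  | n + 1 => by
    rw [Function.iterate_succ_apply']
    exact expBounded_shift (expBounded_shift_iterate hs n)

lemma shift_iterate_apply (s : Addr) (n k : ℕ) : shift^[n] s k = s (k + n) := by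
  induction n generalizing s with
  | zero => rfl
  | succ n ih =>
    rw [Function.iterate_succ_apply, ih]
    exact congrArg s (by omega)

/-- `𝓕` maps `(log (1 + 2π|s₁| + t_{σ(s)}), s)` to `(t_{σ(s)}, σ(s))`, so this potential
bounds `t_s`. -/
lemma Fmodel_endpoint {s : Addr} (hs : ExpBounded s) :
    Fmodel (tmin s, s) = (tmin (shift s), shift s) := by
  set τ := tmin (shift s)
  have hτ : 0 ≤ τ := mem_JF_iff_orb.1 (tmin_mem (expBounded_shift hs)) 0
  set c := 2 * Real.pi * |(s 1 : ℝ)|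
  have hc : 0 ≤ c := by positivity
  have hu : Fmodel (Real.log (1 + c + τ), s) = (τ, shift s) := by
    simp only [Fmodel, Prod.mk.injEq, and_true]
    rw [Real.exp_log (by positivity)]
    ring
  have huJ : (Real.log (1 + c + τ), s) ∈ JF :=
    mem_JF_iff_Fmodel.2 ⟨Real.log_nonneg (by linarith), hu ▸ tmin_mem (expBounded_shift hs)⟩
  have hle : (Fmodel (tmin s, s)).1 ≤ τ :=
    calc (Fmodel (tmin s, s)).1 ≤ (Fmodel (Real.log (1 + c + τ), s)).1 := by
          simp only [Fmodel]
          gcongr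
          exact (isLeast_tmin hs).2 huJ
      _ = τ := by rw [hu]
  have hge : τ ≤ (Fmodel (tmin s, s)).1 :=
    (mem_JF_iff_tmin_le (expBounded_shift hs)).1 (mem_JF_iff_Fmodel.1 (tmin_mem hs)).2
  exact Prod.ext (le_antisymm hle hge) rfl

lemma Fmodel_iterate_endpoint {s : Addr} (hs : ExpBounded s) :
    ∀ n, Fmodel^[n] (tmin s, s) = (tmin (shift^[n] s), shift^[n] s)
  | 0 => rfl
  | n + 1 => by
    rw [Function.iterate_succ_apply', Fmodel_iterate_endpoint hs n,
      Fmodel_endpoint (expBounded_shift_iterate hs n), Function.iterate_succ_apply']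

lemma endpoint_mem_IF_of_fast {s0 s : Addr} (hf : Fast s0) (hs : ExpBounded s)
    (h : ∀ k, |s0 k| ≤ |s k|) : (tmin s, s) ∈ IF := by
  refine ⟨tmin_mem hs, tendsto_atTop_mono (fun n => ?_) hf.2.2⟩
  rw [Fmodel_iterate_endpoint hf.1, Fmodel_iterate_endpoint hs]
  exact tmin_le_tmin (expBounded_shift_iterate hs n) fun k => by
    simp only [shift_iterate_apply]
    exact h _

def bump (s : Addr) (n j : ℕ) : Addr := Function.update s n (|s n| + j)

section bump

variable {s : Addr} {n j k : ℕ}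

lemma abs_bump_of_ne (hk : k ≠ n) : |bump s n j k| = |s k| := by
  rw [bump, Function.update_of_ne hk]

lemma abs_bump_self : |bump s n j n| = |s n| + j := by
  rw [bump, Function.update_self]
  exact abs_of_nonneg (by positivity)

lemma abs_le_abs_bump : |s k| ≤ |bump s n j k| := by
  rcases eq_or_ne k n with rfl | hk
  · rw [abs_bump_self]
    omega
  · rw [abs_bump_of_ne hk]

lemma abs_bump_zero : |bump s n 0 k| = |s k| := by
  rcases eq_or_ne k n with rfl | hk
  · rw [abs_bump_self, Nat.cast_zero, add_zero]
  · exact abs_bump_of_ne hk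

lemma orb_bump_of_le {t : ℝ} (hk : k ≤ n) : orb (bump s (n + 1) j) t k = orb s t k :=
  orb_eq_orb_of_abs_eq fun _ _ hi => abs_bump_of_ne (by omega)

lemma orb_bump_succ {t : ℝ} :
    orb (bump s (n + 1) j) t (n + 1) = orb s t (n + 1) - 2 * Real.pi * j := by
  have habs : |((bump s (n + 1) j (n + 1) : ℤ) : ℝ)| = |(s (n + 1) : ℝ)| + j := by
    exact_mod_cast abs_bump_self
  simp only [orb, orb_bump_of_le le_rfl, habs]
  ring

end bump

lemma exists_bump_tmin_mem_Ioc {s : Addr} {t ε : ℝ} {n : ℕ} (hx : (t, s) ∈ JF) (hε : 0 ≤ ε)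
    (hn : 2 * Real.pi ≤ ε + (n + 1) * (Real.exp ε - 1 - ε)) :
    ∃ j, ExpBounded (bump s (n + 1) j) ∧ tmin (bump s (n + 1) j) ∈ Ioc t (t + ε) := by
  let P : ℕ → Prop := fun j => (t, bump s (n + 1) j) ∈ JF
  have hP0 : P 0 := mem_JF_of_abs_le hx fun _ => abs_bump_zero.le
  obtain ⟨N, hN⟩ := exists_nat_gt (orb s t (n + 1) / (2 * Real.pi))
  have hPN : ¬ P N := fun h => by
    have h0 := mem_JF_iff_orb.1 h (n + 1)
    rw [orb_bump_succ] at h0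
    rw [div_lt_iff₀ (by positivity)] at hN
    linarith
  obtain ⟨j, hj, hj1⟩ : ∃ j, P j ∧ ¬ P (j + 1) := by
    by_contra! H
    exact hPN (Nat.rec hP0 H N)
  have hgain := orb_add_sub_orb_ge hε (n + 1) fun k _ => mem_JF_iff_orb.1 hx k
  have hJ : (t + ε, bump s (n + 1) (j + 1)) ∈ JF := by
    refine mem_JF_iff_orb.2 fun k => ?_
    rcases le_or_gt k n with hk | hk
    · rw [orb_bump_of_le hk]
      exact (mem_JF_iff_orb.1 hx k).trans (orb_mono (by linarith) k)
    · have hstart : orb (bump s (n + 1) j) t (n + 1) ≤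
          orb (bump s (n + 1) (j + 1)) (t + ε) (n + 1) := by
        rw [orb_bump_succ, orb_bump_succ]
        push_cast at hgain ⊢
        linarith
      refine (mem_JF_iff_orb.1 hj k).trans (orb_le_orb hk hstart fun i hi _ => ?_)
      rw [abs_bump_of_ne (by omega), abs_bump_of_ne (by omega)]
  have he : ExpBounded (bump s (n + 1) (j + 1)) := ⟨_, hJ⟩
  exact ⟨j + 1, he, lt_of_not_ge fun h => hj1 ((mem_JF_iff_tmin_le he).2 h),
    (mem_JF_iff_tmin_le he).1 hJ⟩

lemma exists_endpoint_near {s : Addr} {t ε : ℝ} (hx : (t, s) ∈ JF) (hε : 0 < ε) (m : ℕ) :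
    ∃ s' : Addr, ExpBounded s' ∧ (∀ k, |s k| ≤ |s' k|) ∧ (∀ k ≤ m, s' k = s k) ∧
      tmin s' ∈ Ioc t (t + ε) := by
  have hc : 0 < Real.exp ε - 1 - ε := by linarith [Real.add_one_lt_exp hε.ne']
  obtain ⟨N, hN⟩ := exists_nat_ge (2 * Real.pi / (Real.exp ε - 1 - ε))
  have hn : 2 * Real.pi ≤ ε + ((max m N : ℕ) + 1) * (Real.exp ε - 1 - ε) := by
    have hNn : (N : ℝ) ≤ (max m N : ℕ) := by exact_mod_cast le_max_right m N
    rw [div_le_iff₀ hc] at hN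
    nlinarith
  obtain ⟨j, he, ht⟩ := exists_bump_tmin_mem_Ioc hx hε.le hn
  exact ⟨_, he, fun _ => abs_le_abs_bump, fun k hk => Function.update_of_ne (by omega) _ _, ht⟩

lemma Xsub_subset_closure_endpointsIn (s0 : Addr) : Xsub s0 ⊆ closure (endpointsIn s0) := by
  rintro ⟨t, s⟩ ⟨hx, hd⟩
  choose S hS habs hagree ht using fun m : ℕ => exists_endpoint_near hx Nat.one_div_pos_of_nat m
  have htmin : Tendsto (fun m => tmin (S m)) atTop (𝓝 t) := by
    refine tendsto_of_tendsto_of_tendsto_of_le_of_le tendsto_const_nhds ?_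
      (fun m => (ht m).1.le) (fun m => (ht m).2)
    simpa using (tendsto_one_div_add_atTop_nhds_zero_nat (𝕜 := ℝ)).const_add t
  have hlim : Tendsto S atTop (𝓝 s) := tendsto_pi_nhds.2 fun k =>
    tendsto_const_nhds.congr' ((eventually_ge_atTop k).mono fun m hm => (hagree m k hm).symm)
  exact mem_closure_of_tendsto (htmin.prodMk_nhds hlim)
    (Eventually.of_forall fun m => ⟨S m, hS m, fun k => (hd k).trans (habs m k), rfl⟩)

theorem endpoints_dense_in_subfan_general (s0 : Addr) :
    endpointsIn s0 ⊆ Xsub s0 ∧ Xsub s0 ⊆ closure (endpointsIn s0) ∧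
    (Fast s0 → endpointsIn s0 ⊆ escEndF) := by
  refine ⟨?_, Xsub_subset_closure_endpointsIn s0, ?_⟩
  · rintro _ ⟨s, hs, hd, rfl⟩
    exact ⟨tmin_mem hs, hd⟩
  · rintro hf _ ⟨s, hs, hd, rfl⟩
    exact ⟨s, ⟨hs, endpoint_mem_IF_of_fast hf hs hd⟩, rfl⟩

/-- **Endpoints are dense in sub-fans.** For exponentially bounded `s⁰`, the set of
endpoints of `J(𝓕)` contained in `X_{s⁰}(𝓕)` is dense in `X_{s⁰}(𝓕)`; moreover, if `s⁰`
is fast, every such endpoint is an escaping endpoint of `𝓕`. -/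
theorem endpoints_dense_in_subfan (s0 : Addr) (h : ExpBounded s0) :
    endpointsIn s0 ⊆ Xsub s0 ∧ Xsub s0 ⊆ closure (endpointsIn s0) ∧
    (Fast s0 → endpointsIn s0 ⊆ escEndF) :=
  endpoints_dense_in_subfan_general s0

end
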